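/- arXiv:1710.11519 — 2 statements merged into one kernel-verified Lean document; each statement's English description precedes it below -/
import Mathlib

section
/- Let ν = 10(c_3…c_{n+2})^∞ with #_1(c_3…c_{n+2}) odd and c_{n+2} = 1, and assume c_{n+1} = 0 and that the left-infinite tail (10c_3…c_n)^∞ is admissible. Then for every folding point p of X' there exists an admissible L (namely L = (c_3…c_n c_{n+1}^* c_{n+2}^*)^∞ c_3…c_i = (10 c_3…c_n)^∞ 10 c_3…c_i) such that in the embedding φ_L the point p is an accessible Type 3 folding point. -/
/-- number of `true`s among `s 0, …, s (k-1)` (i.e. `#₁(s_k … s_1)` for a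
left-infinite sequence `…s₂s₁` coded by `s : ℕ → Bool` with `s 0 = s₁`). -/
def cnt (s : ℕ → Bool) (k : ℕ) : ℕ :=
  ((Finset.range k).filter (fun i => s i = true)).card

/-- parity-lexicographic strict order on finite binary words. -/
def plLt (s t : List Bool) : Prop :=
  ∃ k, k < s.length ∧ k < t.length ∧ s.take k = t.take k ∧
    s.getD k false ≠ t.getD k false ∧
    ((s.getD k false = false ∧ Even ((s.take k).count true)) ∨
     (s.getD k false = true ∧ Odd ((s.take k).count true)))

def plLe (s t : List Bool) : Prop := s = t ∨ plLt s t

/-- the word `c_{start+1} … c_{start+len}` of the kneading sequence `ν`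
(where `c_{i+1} = ν i`). -/
def nuWord (ν : ℕ → Bool) (start len : ℕ) : List Bool :=
  (List.range len).map (fun j => ν (start + j))

/-- `a = a₁…a_n` is admissible w.r.t. the kneading sequence `ν`:
`c₂…c_{2+n-i} ⪯ a_i…a_n ⪯ c₁…c_{1+n-i}` for all `i`. -/
def AdmissibleWord (ν : ℕ → Bool) (a : List Bool) : Prop :=
  ∀ i, i < a.length →
    plLe (nuWord ν 1 (a.length - i)) (a.drop i) ∧
    plLe (a.drop i) (nuWord ν 0 (a.length - i))

/-- `ν` is an admissible kneading sequence: all of its finite subwords are admissible. -/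
def AdmissibleSeq (ν : ℕ → Bool) : Prop :=
  ∀ k len, AdmissibleWord ν (nuWord ν k len)

/-- the finite subword `s_{k+len} … s_{k+1}` (read forward in time, i.e. with
decreasing index) of the left-infinite sequence `…s₂s₁` coded by `s` (`s 0 = s₁`). -/
def leftWord (s : ℕ → Bool) (k len : ℕ) : List Bool :=
  ((List.range len).map (fun j => s (k + j))).reverse

/-- a left-infinite sequence is admissible iff all of its finite subwords are. -/
def AdmissibleLeft (ν : ℕ → Bool) (s : ℕ → Bool) : Prop :=
  ∀ k len, AdmissibleWord ν (leftWord s k len)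

/-- the order `≺_L` on left-infinite sequences determined by `L = …l₂l₁`. -/
def ltL (L s t : ℕ → Bool) : Prop :=
  ∃ k, (∀ i, i < k → s i = t i) ∧ s k ≠ t k ∧
    ((t k = L k ∧ Even (cnt s k + cnt L k)) ∨
     (s k = L k ∧ ¬ Even (cnt s k + cnt L k)))

/-- the forward word `c_j^* c_{j+1}…c_{n+2} (c_3…c_{n+2})^t c_3…c_{r+2}`
(itinerary suffix of a "long" basic arc near the folding point). -/
def fwLong (ν : ℕ → Bool) (n j t r : ℕ) : List Bool :=
  [!(ν (j - 1))] ++ nuWord ν j (n + 2 - j) ++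
    (List.replicate t (nuWord ν 2 n)).flatten ++ nuWord ν 2 r

/-- the forward word `0 (c_3…c_{n+2})^t c_3…c_{r+2}`
(itinerary suffix of a "left/right" basic arc near the folding point). -/
def fwSide (ν : ℕ → Bool) (n t r : ℕ) : List Bool :=
  [false] ++ (List.replicate t (nuWord ν 2 n)).flatten ++ nuWord ν 2 r

/-- the left-infinite sequence `…s₂s₁` ends (on the right) with the forward word `w`. -/
def EndsWithWord (t : ℕ → Bool) (w : List Bool) : Prop :=
  ∀ j, j < w.length → t j = w.getD (w.length - 1 - j) true

/-- the backward itinerary `(c_3…c_{n+2})^∞ c_3…c_{r+2}` of the folding point `p`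
(where `i = r + 2`). -/
def pseq (ν : ℕ → Bool) (n r : ℕ) : ℕ → Bool :=
  fun j => ν (2 + (((r : ℤ) - 1 - (j : ℤ)) % (n : ℤ)).toNat)

/-- the symbolic characterization of a Type 3 folding point (Lemma 7.15):
there is `M > 0` such that all long basic arcs near `A(←p)` lie on one side of it
(w.r.t. `≺_L`), while the side arcs `…0(c_3…c_{n+2})^{M+N'}c_3…c_i` lie on the
other side for infinitely many even and infinitely many odd `N'`
(or the same with all inequalities reversed). -/
def Type3Cond (ν : ℕ → Bool) (n : ℕ) (L : ℕ → Bool) (r : ℕ) : Prop :=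
  ∃ M : ℕ, 0 < M ∧
    (((∀ N j, 1 ≤ N → 3 ≤ j → j ≤ n + 1 → AdmissibleWord ν (fwLong ν n j (M + N) r) →
        ∀ t, AdmissibleLeft ν t → EndsWithWord t (fwLong ν n j (M + N) r) →
          ltL L t (pseq ν n r)) ∧
      (∀ N0, ∃ N', N0 ≤ N' ∧ Even N' ∧
        ∀ t, AdmissibleLeft ν t → EndsWithWord t (fwSide ν n (M + N') r) →
          ltL L (pseq ν n r) t) ∧
      (∀ N0, ∃ N', N0 ≤ N' ∧ Odd N' ∧
        ∀ t, AdmissibleLeft ν t → EndsWithWord t (fwSide ν n (M + N') r) →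
          ltL L (pseq ν n r) t)) ∨
     ((∀ N j, 1 ≤ N → 3 ≤ j → j ≤ n + 1 → AdmissibleWord ν (fwLong ν n j (M + N) r) →
        ∀ t, AdmissibleLeft ν t → EndsWithWord t (fwLong ν n j (M + N) r) →
          ltL L (pseq ν n r) t) ∧
      (∀ N0, ∃ N', N0 ≤ N' ∧ Even N' ∧
        ∀ t, AdmissibleLeft ν t → EndsWithWord t (fwSide ν n (M + N') r) →
          ltL L t (pseq ν n r)) ∧
      (∀ N0, ∃ N', N0 ≤ N' ∧ Odd N' ∧
        ∀ t, AdmissibleLeft ν t → EndsWithWord t (fwSide ν n (M + N') r) →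
          ltL L t (pseq ν n r))))

/-- the left-infinite periodic sequence `(w)^∞` with period the forward word `w`. -/
def perLeft (w : List Bool) : ℕ → Bool :=
  fun j => w.getD (w.length - 1 - j % w.length) true

/-! ### Auxiliary lemmas -/

lemma t3_cnt_zero (s : ℕ → Bool) : cnt s 0 = 0 := by simp [cnt]

lemma t3_cnt_succ (s : ℕ → Bool) (k : ℕ) :
    cnt s (k + 1) = cnt s k + (if s k = true then 1 else 0) := by
  unfold cnt
  rw [Finset.range_add_one, Finset.filter_insert]
  by_cases h : s k = true
  · rw [if_pos h, if_pos h, Finset.card_insert_of_notMem (by simp)]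
  · rw [if_neg h, if_neg h, Nat.add_zero]

lemma t3_cnt_congr {s t : ℕ → Bool} {k : ℕ} (h : ∀ i, i < k → s i = t i) :
    cnt s k = cnt t k := by
  unfold cnt
  congr 1
  apply Finset.filter_congr
  intro i hi
  rw [Finset.mem_range] at hi
  rw [h i hi]

lemma t3_cnt_front (s : ℕ → Bool) (a b : ℕ) :
    cnt (fun i => s (a + i)) (b + 1)
      = (if s a = true then 1 else 0) + cnt (fun i => s (a + 1 + i)) b := by
  induction b generalizing a with
  | zero => simp [t3_cnt_succ, t3_cnt_zero]
  | succ b ih =>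
    rw [t3_cnt_succ, ih, t3_cnt_succ]
    have h1 : a + (b + 1) = a + 1 + b := by omega
    rw [h1]
    omega

lemma t3_cnt_shift_period {s : ℕ → Bool} {n : ℕ} (hp : ∀ j, s (j + n) = s j) :
    ∀ a, cnt (fun i => s (a + i)) n = cnt s n := by
  intro a
  induction a with
  | zero => apply t3_cnt_congr; intro i _; rw [Nat.zero_add]
  | succ a ih =>
    cases n with
    | zero => simp [t3_cnt_zero]
    | succ m =>
      have h1 := t3_cnt_front s a m
      have h2 : cnt (fun i => s (a + 1 + i)) (m + 1)
          = cnt (fun i => s (a + 1 + i)) m + (if s (a + 1 + m) = true then 1 else 0) :=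
        t3_cnt_succ _ m
      have h3 : s (a + 1 + m) = s a := by
        have := hp a
        rw [show a + 1 + m = a + (m + 1) from by omega]
        exact this
      rw [h3] at h2
      omega

lemma t3_cnt_add (s : ℕ → Bool) (a b : ℕ) :
    cnt s (a + b) = cnt s a + cnt (fun i => s (a + i)) b := by
  induction b with
  | zero => simp [t3_cnt_zero]
  | succ b ih =>
    rw [show a + (b + 1) = (a + b) + 1 from by omega, t3_cnt_succ, ih, t3_cnt_succ]
    omega

lemma t3_cnt_add_period {s : ℕ → Bool} {n : ℕ} (hp : ∀ j, s (j + n) = s j) (a : ℕ) :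
    cnt s (a + n) = cnt s a + cnt s n := by
  rw [t3_cnt_add, t3_cnt_shift_period hp]

lemma t3_parity_period {s s' : ℕ → Bool} {n : ℕ}
    (hp : ∀ j, s (j + n) = s j) (hp' : ∀ j, s' (j + n) = s' j)
    (h1 : cnt s n % 2 = 1) (h1' : cnt s' n % 2 = 1) :
    ∀ k T, (cnt s (k + T * n) + cnt s' (k + T * n)) % 2 = (cnt s k + cnt s' k) % 2 := by
  intro k T
  induction T with
  | zero => simp
  | succ T ih =>
    rw [show k + (T + 1) * n = (k + T * n) + n from by ring,
      t3_cnt_add_period hp, t3_cnt_add_period hp']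
    omega

lemma t3_nuWord_length (ν : ℕ → Bool) (a len : ℕ) : (nuWord ν a len).length = len := by
  simp [nuWord]

lemma t3_nuWord_getD (ν : ℕ → Bool) (a len p : ℕ) (d : Bool) (h : p < len) :
    (nuWord ν a len).getD p d = ν (a + p) := by
  rw [List.getD_eq_getElem _ _ (by rw [t3_nuWord_length]; exact h)]
  simp [nuWord]

lemma t3_flat_length (l : List Bool) (T : ℕ) :
    (List.replicate T l).flatten.length = T * l.length := by
  induction T with
  | zero => simp
  | succ T ih => rw [List.replicate_succ, List.flatten_cons, List.length_append, ih]; ring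

lemma t3_flat_getD (l : List Bool) (d : Bool) :
    ∀ T c p, c < T → p < l.length →
      (List.replicate T l).flatten.getD (c * l.length + p) d = l.getD p d := by
  intro T
  induction T with
  | zero => intro c p hc _; omega
  | succ T ih =>
    intro c p hc hp
    rw [List.replicate_succ, List.flatten_cons]
    cases c with
    | zero =>
      rw [Nat.zero_mul, Nat.zero_add]
      exact List.getD_append _ _ _ _ hp
    | succ c =>
      have hm : (c + 1) * l.length = c * l.length + l.length := by ring
      rw [List.getD_append_right _ _ _ _ (by omega)]
      rw [show (c + 1) * l.length + p - l.length = c * l.length + p from by omega]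
      exact ih c p (by omega) hp

lemma t3_flat_getD' (l : List Bool) (d : Bool) (hl : 0 < l.length) (T p : ℕ)
    (h : p < T * l.length) :
    (List.replicate T l).flatten.getD p d = l.getD (p % l.length) d := by
  have h1 := Nat.div_add_mod p l.length
  have hc : p / l.length < T := (Nat.div_lt_iff_lt_mul hl).mpr h
  have h2 : p = (p / l.length) * l.length + p % l.length := by
    have h3 := Nat.mul_comm l.length (p / l.length)
    omega
  conv_lhs => rw [h2]
  exact t3_flat_getD l d T _ _ hc (Nat.mod_lt _ hl)

lemma t3_mod_key (T n v : ℕ) (hn : 0 < n) (hv : v < T * n) :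
    (T * n - 1 - v) % n = n - 1 - v % n := by
  have h1 := Nat.div_add_mod v n
  have hb : v % n < n := Nat.mod_lt _ hn
  have ha : v / n < T := (Nat.div_lt_iff_lt_mul hn).mpr hv
  obtain ⟨e, he⟩ : ∃ e, T = v / n + 1 + e := ⟨T - (v / n + 1), by omega⟩
  have h2 : T * n = (v / n) * n + n + e * n := by rw [he]; ring
  have h4 : n * (v / n) = (v / n) * n := Nat.mul_comm _ _
  have h3 : T * n - 1 - v = (n - 1 - v % n) + e * n := by omega
  rw [h3, Nat.add_mul_mod_self_right, Nat.mod_eq_of_lt (by omega)]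

lemma t3_pseq_period (ν : ℕ → Bool) (n r : ℕ) (j : ℕ) :
    pseq ν n r (j + n) = pseq ν n r j := by
  unfold pseq
  have h : ((r : ℤ) - 1 - ((j + n : ℕ) : ℤ)) % (n : ℤ) = ((r : ℤ) - 1 - (j : ℕ)) % (n : ℤ) := by
    push_cast
    rw [show (r : ℤ) - 1 - ((j : ℤ) + (n : ℤ)) = ((r : ℤ) - 1 - (j : ℤ)) + (n : ℤ) * (-1) from by
      ring]
    rw [Int.add_mul_emod_self_left]
  rw [h]

lemma t3_pseq_mul (ν : ℕ → Bool) (n r : ℕ) :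
    ∀ T j, pseq ν n r (j + T * n) = pseq ν n r j := by
  intro T
  induction T with
  | zero => intro j; simp
  | succ T ih =>
    intro j
    rw [show j + (T + 1) * n = (j + T * n) + n from by ring, t3_pseq_period, ih]

lemma t3_pseq_lt (ν : ℕ → Bool) (n r j : ℕ) (hj : j < r) (hr : r ≤ n) :
    pseq ν n r j = ν (2 + (r - 1 - j)) := by
  unfold pseq
  rw [Int.emod_eq_of_lt (by omega) (by omega)]
  congr 1
  omega

lemma t3_pseq_ru (ν : ℕ → Bool) (n r u : ℕ) (hu : u < n) :
    pseq ν n r (r + u) = ν (2 + (n - 1 - u)) := by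
  unfold pseq
  rw [show ((r : ℤ) - 1 - ((r + u : ℕ) : ℤ)) = ((n : ℤ) - 1 - (u : ℤ)) + (n : ℤ) * (-1) from by
    push_cast; ring]
  rw [Int.add_mul_emod_self_left, Int.emod_eq_of_lt (by omega) (by omega)]
  congr 1
  omega

lemma t3_pseq_rv (ν : ℕ → Bool) (n r v : ℕ) (hn : 0 < n) :
    pseq ν n r (r + v) = ν (2 + (n - 1 - v % n)) := by
  have h1 := Nat.div_add_mod v n
  have h4 : n * (v / n) = (v / n) * n := Nat.mul_comm _ _
  rw [show r + v = (r + v % n) + (v / n) * n from by omega, t3_pseq_mul,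
    t3_pseq_ru _ _ _ _ (Nat.mod_lt _ hn)]

lemma t3_pseq_val (ν : ℕ → Bool) (n r j : ℕ) (hn : 0 < n) (hjr : r ≤ j) :
    pseq ν n r j = ν (2 + (n - 1 - (j - r) % n)) := by
  obtain ⟨v, rfl⟩ : ∃ v, j = r + v := ⟨j - r, by omega⟩
  rw [Nat.add_sub_cancel_left]
  exact t3_pseq_rv ν n r v hn

/-- the shifted periodic tail used as the embedding order `L`. -/
def t3Q (ν : ℕ → Bool) (n : ℕ) : ℕ → Bool :=
  perLeft ([true, false] ++ nuWord ν 2 (n - 2))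

def t3L (ν : ℕ → Bool) (n r : ℕ) : ℕ → Bool :=
  fun j => t3Q ν n ((2 * n - 2 - r) + j)

lemma t3_Q_eval (ν : ℕ → Bool) (n : ℕ) (hn : 2 ≤ n) (m : ℕ) :
    t3Q ν n m = (if m % n = n - 1 then true
      else if m % n = n - 2 then false else ν (n - 1 - m % n)) := by
  have hlen : ([true, false] ++ nuWord ν 2 (n - 2)).length = n := by
    rw [List.length_append, t3_nuWord_length]; simp; omega
  unfold t3Q perLeft
  rw [hlen]
  have hm : m % n < n := Nat.mod_lt _ (by omega)
  by_cases h1 : m % n = n - 1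
  · rw [if_pos h1, h1, show n - 1 - (n - 1) = 0 from by omega]
    rfl
  · rw [if_neg h1]
    by_cases h2 : m % n = n - 2
    · rw [if_pos h2, h2, show n - 1 - (n - 2) = 1 from by omega]
      rfl
    · rw [if_neg h2]
      have h3 : m % n ≤ n - 3 := by omega
      have h4 : 2 ≤ n - 1 - m % n := by omega
      rw [List.getD_append_right _ _ _ _ (by simp; omega)]
      rw [t3_nuWord_getD _ _ _ _ _ (by simp; omega)]
      congr 1
      simp
      omega

lemma t3_Q_period (ν : ℕ → Bool) (n : ℕ) (hn : 2 ≤ n) (j : ℕ) :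
    t3Q ν n (j + n) = t3Q ν n j := by
  rw [t3_Q_eval ν n hn, t3_Q_eval ν n hn, Nat.add_mod_right]

lemma t3_countList (f : ℕ → Bool) :
    ∀ len, ((List.range len).map f).count true
      = ((Finset.range len).filter (fun i => f i = true)).card := by
  intro len
  induction len with
  | zero => simp
  | succ m ih =>
    rw [List.range_succ, List.map_append, List.count_append, Finset.range_add_one,
      Finset.filter_insert]
    by_cases h : f m = true
    · rw [if_pos h, Finset.card_insert_of_notMem (by simp)]
      simp [h, ih]
    · rw [if_neg h]
      have h' : f m = false := by
        cases hfm : f m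
        · rfl
        · exact absurd hfm h
      simp [h', ih]

lemma t3_cnt_pseq (ν : ℕ → Bool) (n r : ℕ) (hr1 : 1 ≤ r) (hrn : r ≤ n) :
    cnt (pseq ν n r) n = ((Finset.range n).filter (fun i => ν (2 + i) = true)).card := by
  have key : ∀ a, a < n →
      pseq ν n r a = ν (2 + (if a < r then r - 1 - a else n - 1 + r - a)) := by
    intro a ha
    by_cases h2 : a < r
    · rw [if_pos h2, t3_pseq_lt ν n r a h2 hrn]
    · rw [if_neg h2, show a = r + (a - r) from by omega, t3_pseq_ru _ _ _ _ (by omega)]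
      congr 1
      omega
  unfold cnt
  apply Finset.card_bij' (i := fun j _ => if j < r then r - 1 - j else n - 1 + r - j)
    (j := fun j _ => if j < r then r - 1 - j else n - 1 + r - j)
  · intro a ha
    rw [Finset.mem_filter, Finset.mem_range] at ha ⊢
    obtain ⟨ha1, ha2⟩ := ha
    rw [key a ha1] at ha2
    constructor
    · split <;> omega
    · exact ha2
  · intro a ha
    rw [Finset.mem_filter, Finset.mem_range] at ha ⊢
    obtain ⟨ha1, ha2⟩ := ha
    have hb : (if a < r then r - 1 - a else n - 1 + r - a) < n := by split <;> omega
    refine ⟨hb, ?_⟩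
    rw [key _ hb]
    convert ha2 using 3
    split <;> (try split) <;> omega
  · intro a ha
    rw [Finset.mem_filter, Finset.mem_range] at ha
    split <;> (try split) <;> omega
  · intro a ha
    rw [Finset.mem_filter, Finset.mem_range] at ha
    split <;> (try split) <;> omega

lemma t3_cnt_Q (ν : ℕ → Bool) (n : ℕ) (hn : 2 ≤ n) (hc : ν n = false)
    (hlast : ν (n + 1) = true) :
    cnt (t3Q ν n) n = ((Finset.range n).filter (fun i => ν (2 + i) = true)).card := by
  have key : ∀ a, a < n →
      t3Q ν n a = ν (2 + (if a + 3 ≤ n then n - 3 - a else a)) := by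
    intro a ha
    rw [t3_Q_eval ν n hn, Nat.mod_eq_of_lt ha]
    by_cases h1 : a = n - 1
    · rw [if_pos h1, if_neg (by omega)]
      rw [show 2 + a = n + 1 from by omega, hlast]
    · rw [if_neg h1]
      by_cases h2 : a = n - 2
      · rw [if_pos h2, if_neg (by omega)]
        rw [show 2 + a = n from by omega, hc]
      · rw [if_neg h2, if_pos (by omega)]
        congr 1
        omega
  unfold cnt
  apply Finset.card_bij' (i := fun j _ => if j + 3 ≤ n then n - 3 - j else j)
    (j := fun j _ => if j + 3 ≤ n then n - 3 - j else j)
  · intro a ha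
    rw [Finset.mem_filter, Finset.mem_range] at ha ⊢
    obtain ⟨ha1, ha2⟩ := ha
    rw [key a ha1] at ha2
    constructor
    · split <;> omega
    · exact ha2
  · intro a ha
    rw [Finset.mem_filter, Finset.mem_range] at ha ⊢
    obtain ⟨ha1, ha2⟩ := ha
    have hb : (if a + 3 ≤ n then n - 3 - a else a) < n := by split <;> omega
    refine ⟨hb, ?_⟩
    rw [key _ hb]
    convert ha2 using 3
    split <;> (try split) <;> omega
  · intro a ha
    rw [Finset.mem_filter, Finset.mem_range] at ha
    split <;> (try split) <;> omega
  · intro a ha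
    rw [Finset.mem_filter, Finset.mem_range] at ha
    split <;> (try split) <;> omega

lemma t3_side_len (ν : ℕ → Bool) (n T r : ℕ) :
    (fwSide ν n T r).length = 1 + T * n + r := by
  unfold fwSide
  rw [List.length_append, List.length_append, t3_flat_length, t3_nuWord_length,
    t3_nuWord_length]
  simp

lemma t3_side_getD_zero (ν : ℕ → Bool) (n T r : ℕ) :
    (fwSide ν n T r).getD 0 true = false := by
  unfold fwSide
  rfl

lemma t3_side_agree (ν : ℕ → Bool) (n r : ℕ) (hr1 : 1 ≤ r) (hrn : r ≤ n)
    (T j : ℕ) (hj : j < T * n + r) :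
    (fwSide ν n T r).getD (T * n + r - j) true = pseq ν n r j := by
  have hn : 0 < n := by omega
  unfold fwSide
  have hlenF : (List.replicate T (nuWord ν 2 n)).flatten.length = T * n := by
    rw [t3_flat_length, t3_nuWord_length]
  have hlen1 : ([false] ++ (List.replicate T (nuWord ν 2 n)).flatten).length = 1 + T * n := by
    rw [List.length_append, hlenF]; rfl
  by_cases hjr : j < r
  · rw [List.getD_append_right _ _ _ _ (by rw [hlen1]; omega)]
    rw [hlen1]
    rw [t3_nuWord_getD _ _ _ _ _ (by omega)]
    rw [t3_pseq_lt ν n r j hjr hrn]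
    congr 1
    omega
  · rw [List.getD_append _ _ _ _ (by rw [hlen1]; omega)]
    rw [List.getD_append_right _ _ _ _ (by simp; omega)]
    simp only [List.length_singleton]
    have hpos : T * n + r - j - 1 = T * n - 1 - (j - r) := by omega
    rw [hpos]
    have hv : j - r < T * n := by omega
    rw [t3_flat_getD' _ _ (by rw [t3_nuWord_length]; omega) T _
      (by rw [t3_nuWord_length]; omega)]
    rw [t3_nuWord_length]
    rw [t3_mod_key T n (j - r) hn hv]
    rw [t3_nuWord_getD _ _ _ _ _ (by omega)]
    exact (t3_pseq_val ν n r j hn (by omega)).symm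

lemma t3_long_len (ν : ℕ → Bool) (n jj T r : ℕ) :
    (fwLong ν n jj T r).length = 1 + (n + 2 - jj) + T * n + r := by
  unfold fwLong
  rw [List.length_append, List.length_append, List.length_append, t3_flat_length,
    t3_nuWord_length, t3_nuWord_length, t3_nuWord_length]
  simp

lemma t3_long_getD_zero (ν : ℕ → Bool) (n jj T r : ℕ) :
    (fwLong ν n jj T r).getD 0 true = !(ν (jj - 1)) := by
  unfold fwLong
  rfl

lemma t3_long_agree (ν : ℕ → Bool) (n r jj : ℕ) (hr1 : 1 ≤ r) (hrn : r ≤ n)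
    (hjj3 : 3 ≤ jj) (hjjn : jj ≤ n + 1)
    (T j : ℕ) (hj : j < T * n + r + (n + 2 - jj)) :
    (fwLong ν n jj T r).getD (T * n + r + (n + 2 - jj) - j) true = pseq ν n r j := by
  have hn : 0 < n := by omega
  unfold fwLong
  have hlenF : (List.replicate T (nuWord ν 2 n)).flatten.length = T * n := by
    rw [t3_flat_length, t3_nuWord_length]
  have hlenB : (nuWord ν jj (n + 2 - jj)).length = n + 2 - jj := t3_nuWord_length _ _ _
  have hlen1 : ([!(ν (jj - 1))] ++ nuWord ν jj (n + 2 - jj)).length = 1 + (n + 2 - jj) := by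
    rw [List.length_append, hlenB]; rfl
  have hlen2 : ([!(ν (jj - 1))] ++ nuWord ν jj (n + 2 - jj)
      ++ (List.replicate T (nuWord ν 2 n)).flatten).length = 1 + (n + 2 - jj) + T * n := by
    rw [List.length_append, hlen1, hlenF]
  by_cases hjr : j < r
  · rw [List.getD_append_right _ _ _ _ (by rw [hlen2]; omega)]
    rw [hlen2]
    rw [t3_nuWord_getD _ _ _ _ _ (by omega)]
    rw [t3_pseq_lt ν n r j hjr hrn]
    congr 1
    omega
  · by_cases hjF : j < T * n + r
    · -- inside the flatten block
      rw [List.getD_append _ _ _ _ (by rw [hlen2]; omega)]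
      rw [List.getD_append_right _ _ _ _ (by rw [hlen1]; omega)]
      rw [hlen1]
      have hpos : T * n + r + (n + 2 - jj) - j - (1 + (n + 2 - jj)) = T * n - 1 - (j - r) := by
        omega
      rw [hpos]
      have hv : j - r < T * n := by omega
      rw [t3_flat_getD' _ _ (by rw [t3_nuWord_length]; omega) T _
        (by rw [t3_nuWord_length]; omega)]
      rw [t3_nuWord_length]
      rw [t3_mod_key T n (j - r) hn hv]
      rw [t3_nuWord_getD _ _ _ _ _ (by omega)]
      exact (t3_pseq_val ν n r j hn (by omega)).symm
    · -- inside the B block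
      have hu : j - (T * n + r) ≤ n + 1 - jj := by omega
      rw [List.getD_append _ _ _ _ (by rw [hlen2]; omega)]
      rw [List.getD_append _ _ _ _ (by rw [hlen1]; omega)]
      rw [List.getD_append_right _ _ _ _ (by simp; omega)]
      simp only [List.length_singleton]
      rw [t3_nuWord_getD _ _ _ _ _ (by omega)]
      rw [t3_pseq_val ν n r j hn (by omega)]
      have h5 : (j - r) % n = j - (T * n + r) := by
        rw [show j - r = n * T + (j - (T * n + r)) from by have := Nat.mul_comm n T; omega, Nat.mul_add_mod,
          Nat.mod_eq_of_lt (by omega)]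
      rw [h5]
      congr 1
      omega

lemma t3_n1_side (ν : ℕ → Bool) (hν2 : ∀ m, ν (2 + m) = true) (T : ℕ) (t : ℕ → Bool)
    (hEnds : EndsWithWord t (fwSide ν 1 T 1)) : ltL (fun _ => true) t (pseq ν 1 1) := by
  have hlen := t3_side_len ν 1 T 1
  have hPtrue : ∀ i, pseq ν 1 1 i = true := by
    intro i
    unfold pseq
    exact hν2 _
  have hagree : ∀ i, i < T * 1 + 1 → t i = pseq ν 1 1 i := by
    intro i hi
    rw [hEnds i (by omega)]
    rw [show (fwSide ν 1 T 1).length - 1 - i = T * 1 + 1 - i from by omega]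
    exact t3_side_agree ν 1 1 le_rfl le_rfl T i hi
  refine ⟨T * 1 + 1, hagree, ?_, Or.inl ⟨?_, ?_⟩⟩
  · rw [hEnds _ (by omega),
      show (fwSide ν 1 T 1).length - 1 - (T * 1 + 1) = 0 from by omega,
      t3_side_getD_zero, hPtrue]
    simp
  · rw [hPtrue]
  · have h2 : cnt t (T * 1 + 1) = cnt (fun _ => (true : Bool)) (T * 1 + 1) :=
      t3_cnt_congr (fun i hi => by rw [hagree i hi, hPtrue])
    rw [h2]
    exact ⟨_, rfl⟩

/-- Let `ν = 10(c_3…c_{n+2})^∞` with `#₁(c_3…c_{n+2})` odd, `c_{n+2} = 1` and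
`c_{n+1} = 0`, and assume the tail `(10c_3…c_n)^∞` is admissible. Then for every
folding point `p` of `X'` there exists an admissible `L` (namely
`L = (10c_3…c_n)^∞ 10c_3…c_i`) such that in the embedding `φ_L` the point `p`
is an accessible Type 3 folding point. -/
theorem exists_L_type3 (ν : ℕ → Bool) (hν : AdmissibleSeq ν)
    (n : ℕ) (hn : 1 ≤ n)
    (h0 : ν 0 = true) (h1 : ν 1 = false)
    (hper : ∀ k, ν (2 + k) = ν (2 + k % n))
    (hlast : ν (n + 1) = true)
    (hodd : Odd ((nuWord ν 2 n).count true))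
    (hc : ν n = false)
    (htail : AdmissibleLeft ν (perLeft ([true, false] ++ nuWord ν 2 (n - 2)))) :
    ∀ r, 1 ≤ r → r ≤ n →
      ∃ L : ℕ → Bool, AdmissibleLeft ν L ∧ Type3Cond ν n L r := by
  intro r hr1 hr2
  by_cases hn1 : n = 1
  · -- the degenerate case `n = 1`
    subst hn1
    have hr : r = 1 := by omega
    subst hr
    have hν2 : ∀ m : ℕ, ν (2 + m) = true := by
      intro m
      rw [hper m, Nat.mod_one]
      exact hlast
    refine ⟨fun _ => true, ?_, 1, Nat.one_pos, Or.inr ⟨?_, ?_, ?_⟩⟩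
    · intro k len
      have he : leftWord (fun _ => true) k len = nuWord ν 2 len := by
        have h1' : nuWord ν 2 len = (List.range len).map (fun _ => true) :=
          List.map_congr_left (fun j _ => hν2 j)
        show ((List.range len).map (fun _ => (true : Bool))).reverse = _
        rw [h1', List.map_const', List.reverse_replicate]
      rw [he]
      exact hν 2 len
    · intro N jj hN hjj3 hjjn
      exact absurd hjjn (by omega)
    · intro N0
      exact ⟨2 * N0, by omega, ⟨N0, by ring⟩, fun t _ hE => t3_n1_side ν hν2 _ t hE⟩
    · intro N0
      exact ⟨2 * N0 + 1, by omega, ⟨N0, rfl⟩, fun t _ hE => t3_n1_side ν hν2 _ t hE⟩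
  · -- the main case `2 ≤ n`
    have hn2 : 2 ≤ n := by omega
    have hQper : ∀ j, t3Q ν n (j + n) = t3Q ν n j := t3_Q_period ν n hn2
    have hLper : ∀ j, t3L ν n r (j + n) = t3L ν n r j := by
      intro j
      show t3Q ν n ((2 * n - 2 - r) + (j + n)) = t3Q ν n ((2 * n - 2 - r) + j)
      rw [show (2 * n - 2 - r) + (j + n) = ((2 * n - 2 - r) + j) + n from by omega, hQper]
    have hPper : ∀ j, pseq ν n r (j + n) = pseq ν n r j := t3_pseq_period ν n r
    have hcard : ((Finset.range n).filter (fun i => ν (2 + i) = true)).card % 2 = 1 := by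
      rw [← t3_countList (fun j => ν (2 + j)) n]
      exact Nat.odd_iff.mp hodd
    have hOddP : cnt (pseq ν n r) n % 2 = 1 := by
      rw [t3_cnt_pseq ν n r hr1 hr2]; exact hcard
    have hOddL : cnt (t3L ν n r) n % 2 = 1 := by
      have h2 : cnt (t3L ν n r) n = cnt (t3Q ν n) n :=
        t3_cnt_shift_period hQper (2 * n - 2 - r)
      rw [h2, t3_cnt_Q ν n hn2 hc hlast]; exact hcard
    have hEper : ∀ k T, (cnt (pseq ν n r) (k + T * n) + cnt (t3L ν n r) (k + T * n)) % 2
        = (cnt (pseq ν n r) k + cnt (t3L ν n r) k) % 2 :=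
      t3_parity_period hPper hLper hOddP hOddL
    have hLval : ∀ T u, u ≤ n - 1 → t3L ν n r (T * n + (r + u)) =
        (if u = 0 then false else if u = 1 then true else ν (n + 1 - u)) := by
      intro T u hu
      show t3Q ν n ((2 * n - 2 - r) + (T * n + (r + u))) = _
      rw [show (2 * n - 2 - r) + (T * n + (r + u)) = (2 * n - 2 + u) + T * n from by omega]
      rw [t3_Q_eval ν n hn2, Nat.add_mul_mod_self_right]
      by_cases h0 : u = 0
      · subst h0
        rw [show 2 * n - 2 + 0 = (n - 2) + n from by omega, Nat.add_mod_right,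
          Nat.mod_eq_of_lt (by omega), if_neg (by omega), if_pos rfl]
        simp
      · by_cases h1' : u = 1
        · subst h1'
          rw [show 2 * n - 2 + 1 = (n - 1) + n from by omega, Nat.add_mod_right,
            Nat.mod_eq_of_lt (by omega), if_pos rfl]
          simp
        · rw [show 2 * n - 2 + u = (u - 2) + 2 * n from by omega,
            Nat.add_mul_mod_self_right, Nat.mod_eq_of_lt (by omega),
            if_neg (by omega), if_neg (by omega), if_neg h0, if_neg h1']
          congr 1
          omega
    have hPval : ∀ T u, u < n → pseq ν n r (T * n + (r + u)) = ν (2 + (n - 1 - u)) := by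
      intro T u hu
      rw [show T * n + (r + u) = (r + u) + T * n from by omega, t3_pseq_mul,
        t3_pseq_ru _ _ _ _ hu]
    have hPv : ∀ u, u < n → pseq ν n r (r + u) = ν (2 + (n - 1 - u)) :=
      fun u hu => t3_pseq_ru ν n r u hu
    have hLv : ∀ u, u ≤ n - 1 → t3L ν n r (r + u) =
        (if u = 0 then false else if u = 1 then true else ν (n + 1 - u)) := by
      intro u hu
      have h2 := hLval 0 u hu
      rw [show 0 * n + (r + u) = r + u from by omega] at h2
      exact h2
    have hpr : pseq ν n r r = true := by
      have h2 := hPv 0 (by omega)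
      rw [Nat.add_zero] at h2
      rw [h2, show 2 + (n - 1 - 0) = n + 1 from by omega, hlast]
    have hlr : t3L ν n r r = false := by
      have h2 := hLv 0 (by omega)
      rw [Nat.add_zero] at h2
      simpa using h2
    have hpr1 : pseq ν n r (r + 1) = false := by
      rw [hPv 1 (by omega), show 2 + (n - 1 - 1) = n from by omega, hc]
    have hlr1 : t3L ν n r (r + 1) = true := by
      have h2 := hLv 1 (by omega)
      simpa using h2
    have hE1 : (cnt (pseq ν n r) (r + 1) + cnt (t3L ν n r) (r + 1)) % 2
        = (cnt (pseq ν n r) r + cnt (t3L ν n r) r + 1) % 2 := by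
      rw [t3_cnt_succ (pseq ν n r) r, t3_cnt_succ (t3L ν n r) r, hpr, hlr]
      simp
      omega
    have hEu : ∀ u, u ≤ n - 1 → (cnt (pseq ν n r) (r + u) + cnt (t3L ν n r) (r + u)) % 2
        = (cnt (pseq ν n r) r + cnt (t3L ν n r) r
            + (if u = 0 then 0 else if u = 1 then 1 else 2)) % 2 := by
      intro u
      induction u with
      | zero => intro _; simp
      | succ u ih =>
        intro hu
        have ihu := ih (by omega)
        by_cases h0 : u = 0
        · subst h0
          rw [show r + (0 + 1) = r + 1 from by omega, hE1]
          simp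
        · by_cases h1' : u = 1
          · subst h1'
            rw [show r + (1 + 1) = (r + 1) + 1 from by omega,
              t3_cnt_succ (pseq ν n r) (r + 1), t3_cnt_succ (t3L ν n r) (r + 1),
              hpr1, hlr1,
              if_neg (show ¬((1:ℕ) + 1 = 0) from by omega),
              if_neg (show ¬((1:ℕ) + 1 = 1) from by omega)]
            simp
            omega
          · have heq : t3L ν n r (r + u) = pseq ν n r (r + u) := by
              rw [hPv u (by omega), hLv u (by omega), if_neg h0, if_neg h1']
              congr 1
              omega
            rw [show r + (u + 1) = (r + u) + 1 from by omega,
              t3_cnt_succ (pseq ν n r) (r + u), t3_cnt_succ (t3L ν n r) (r + u), heq]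
            rw [if_neg (show ¬(u + 1 = 0) from by omega),
              if_neg (show ¬(u + 1 = 1) from by omega)]
            rw [if_neg h0, if_neg h1'] at ihu
            omega
    have hSide : ∀ T t, EndsWithWord t (fwSide ν n T r) →
        (∀ i, i < T * n + r → t i = pseq ν n r i) ∧ t (T * n + r) = false ∧
        pseq ν n r (T * n + r) = true ∧ t3L ν n r (T * n + r) = false ∧
        (cnt (pseq ν n r) (T * n + r) + cnt (t3L ν n r) (T * n + r)) % 2
          = (cnt (pseq ν n r) r + cnt (t3L ν n r) r) % 2 := by
      intro T t hEnds
      have hlen := t3_side_len ν n T r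
      refine ⟨?_, ?_, ?_, ?_, ?_⟩
      · intro i hi
        rw [hEnds i (by omega)]
        rw [show (fwSide ν n T r).length - 1 - i = T * n + r - i from by omega]
        exact t3_side_agree ν n r hr1 hr2 T i hi
      · rw [hEnds _ (by omega),
          show (fwSide ν n T r).length - 1 - (T * n + r) = 0 from by omega,
          t3_side_getD_zero]
      · have h2 := hPval T 0 (by omega)
        rw [Nat.add_zero] at h2
        rw [h2, show 2 + (n - 1 - 0) = n + 1 from by omega, hlast]
      · have h2 := hLval T 0 (by omega)
        rw [Nat.add_zero] at h2
        simpa using h2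
      · rw [show T * n + r = r + T * n from by omega]
        exact hEper r T
    have hLong : ∀ T jj, 3 ≤ jj → jj ≤ n + 1 → ∀ t, EndsWithWord t (fwLong ν n jj T r) →
        (∀ i, i < T * n + (r + (n + 2 - jj)) → t i = pseq ν n r i) ∧
        t (T * n + (r + (n + 2 - jj))) = !(ν (jj - 1)) ∧
        pseq ν n r (T * n + (r + (n + 2 - jj))) = ν (jj - 1) ∧
        t3L ν n r (T * n + (r + (n + 2 - jj))) =
          (if n + 2 - jj = 1 then true else ν (jj - 1)) ∧
        (cnt (pseq ν n r) (T * n + (r + (n + 2 - jj)))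
            + cnt (t3L ν n r) (T * n + (r + (n + 2 - jj)))) % 2
          = (cnt (pseq ν n r) r + cnt (t3L ν n r) r
              + (if n + 2 - jj = 1 then 1 else 2)) % 2 := by
      intro T jj h3 hjn t hEnds
      have hlen := t3_long_len ν n jj T r
      have hu1 : 1 ≤ n + 2 - jj := by omega
      have hun : n + 2 - jj ≤ n - 1 := by omega
      refine ⟨?_, ?_, ?_, ?_, ?_⟩
      · intro i hi
        rw [hEnds i (by omega)]
        rw [show (fwLong ν n jj T r).length - 1 - i = T * n + r + (n + 2 - jj) - i from by
          omega]
        exact t3_long_agree ν n r jj hr1 hr2 h3 hjn T i (by omega)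
      · rw [hEnds _ (by omega),
          show (fwLong ν n jj T r).length - 1 - (T * n + (r + (n + 2 - jj))) = 0 from by
            omega,
          t3_long_getD_zero]
      · rw [hPval T (n + 2 - jj) (by omega)]
        congr 1
        omega
      · rw [hLval T (n + 2 - jj) hun, if_neg (show ¬(n + 2 - jj = 0) from by omega)]
        by_cases h : n + 2 - jj = 1
        · rw [if_pos h, if_pos h]
        · rw [if_neg h, if_neg h]
          congr 1
          omega
      · rw [show T * n + (r + (n + 2 - jj)) = (r + (n + 2 - jj)) + T * n from by omega,
          hEper (r + (n + 2 - jj)) T]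
        have h6 := hEu (n + 2 - jj) hun
        rw [if_neg (show ¬(n + 2 - jj = 0) from by omega)] at h6
        exact h6
    refine ⟨t3L ν n r, ?_, ?_⟩
    · intro k len
      have he : leftWord (t3L ν n r) k len = leftWord (t3Q ν n) ((2 * n - 2 - r) + k) len := by
        unfold leftWord
        congr 1
        apply List.map_congr_left
        intro j _
        show t3Q ν n ((2 * n - 2 - r) + (k + j)) = t3Q ν n (((2 * n - 2 - r) + k) + j)
        congr 1
        omega
      rw [he]
      exact htail _ _
    · by_cases hpar : (cnt (pseq ν n r) r + cnt (t3L ν n r) r) % 2 = 0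
      · refine ⟨1, Nat.one_pos, Or.inl ⟨?_, ?_, ?_⟩⟩
        · intro N jj hN h3 hjn _ t _ hEnds
          obtain ⟨hag, htk, hpk, hlk, hparity⟩ := hLong (1 + N) jj h3 hjn t hEnds
          refine ⟨(1 + N) * n + (r + (n + 2 - jj)), hag, ?_, ?_⟩
          · rw [htk, hpk]
            cases ν (jj - 1) <;> simp
          · have hcnteq : cnt t ((1 + N) * n + (r + (n + 2 - jj)))
                = cnt (pseq ν n r) ((1 + N) * n + (r + (n + 2 - jj))) := t3_cnt_congr hag
            by_cases hone : n + 2 - jj = 1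
            · refine Or.inr ⟨?_, ?_⟩
              · rw [htk, hlk, if_pos hone, show jj - 1 = n from by omega, hc]
                rfl
              · rw [Nat.even_iff, hcnteq]
                rw [if_pos hone] at hparity
                omega
            · refine Or.inl ⟨?_, ?_⟩
              · rw [hpk, hlk, if_neg hone]
              · rw [Nat.even_iff, hcnteq]
                rw [if_neg hone] at hparity
                omega
        · intro N0
          refine ⟨2 * N0, by omega, ⟨N0, by ring⟩, ?_⟩
          intro t _ hEnds
          obtain ⟨hag, htk, hpk, hlk, hparity⟩ := hSide (1 + 2 * N0) t hEnds
          refine ⟨(1 + 2 * N0) * n + r, fun i hi => (hag i hi).symm, ?_, Or.inl ⟨?_, ?_⟩⟩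
          · rw [htk, hpk]
            simp
          · rw [htk, hlk]
          · rw [Nat.even_iff]
            omega
        · intro N0
          refine ⟨2 * N0 + 1, by omega, ⟨N0, rfl⟩, ?_⟩
          intro t _ hEnds
          obtain ⟨hag, htk, hpk, hlk, hparity⟩ := hSide (1 + (2 * N0 + 1)) t hEnds
          refine ⟨(1 + (2 * N0 + 1)) * n + r, fun i hi => (hag i hi).symm, ?_,
            Or.inl ⟨?_, ?_⟩⟩
          · rw [htk, hpk]
            simp
          · rw [htk, hlk]
          · rw [Nat.even_iff]
            omega
      · have hpar1 : (cnt (pseq ν n r) r + cnt (t3L ν n r) r) % 2 = 1 := by omega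
        refine ⟨1, Nat.one_pos, Or.inr ⟨?_, ?_, ?_⟩⟩
        · intro N jj hN h3 hjn _ t _ hEnds
          obtain ⟨hag, htk, hpk, hlk, hparity⟩ := hLong (1 + N) jj h3 hjn t hEnds
          refine ⟨(1 + N) * n + (r + (n + 2 - jj)), fun i hi => (hag i hi).symm, ?_, ?_⟩
          · rw [htk, hpk]
            cases ν (jj - 1) <;> simp
          · by_cases hone : n + 2 - jj = 1
            · refine Or.inl ⟨?_, ?_⟩
              · rw [htk, hlk, if_pos hone, show jj - 1 = n from by omega, hc]
                rfl
              · rw [Nat.even_iff]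
                rw [if_pos hone] at hparity
                omega
            · refine Or.inr ⟨?_, ?_⟩
              · rw [hpk, hlk, if_neg hone]
              · rw [Nat.even_iff]
                rw [if_neg hone] at hparity
                omega
        · intro N0
          refine ⟨2 * N0, by omega, ⟨N0, by ring⟩, ?_⟩
          intro t _ hEnds
          obtain ⟨hag, htk, hpk, hlk, hparity⟩ := hSide (1 + 2 * N0) t hEnds
          have hcnteq : cnt t ((1 + 2 * N0) * n + r)
              = cnt (pseq ν n r) ((1 + 2 * N0) * n + r) := t3_cnt_congr hag
          refine ⟨(1 + 2 * N0) * n + r, hag, ?_, Or.inr ⟨?_, ?_⟩⟩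
          · rw [htk, hpk]
            simp
          · rw [htk, hlk]
          · rw [Nat.even_iff, hcnteq]
            omega
        · intro N0
          refine ⟨2 * N0 + 1, by omega, ⟨N0, rfl⟩, ?_⟩
          intro t _ hEnds
          obtain ⟨hag, htk, hpk, hlk, hparity⟩ := hSide (1 + (2 * N0 + 1)) t hEnds
          have hcnteq : cnt t ((1 + (2 * N0 + 1)) * n + r)
              = cnt (pseq ν n r) ((1 + (2 * N0 + 1)) * n + r) := t3_cnt_congr hag
          refine ⟨(1 + (2 * N0 + 1)) * n + r, hag, ?_, Or.inr ⟨?_, ?_⟩⟩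
          · rw [htk, hpk]
            simp
          · rw [htk, hlk]
          · rw [Nat.even_iff, hcnteq]
            omega
end

section
/- Fix a tent map kneading sequence ν and a left-infinite sequence L = …l_2l_1, and let a_n…a_1 be an admissible finite word. If ←x = …x_2x_1 is admissible and there exists n such that …x_{n+2}x_{n+1} = …l_{n+2}l_{n+1}, then: if #_1(x_n…x_1) and #_1(l_n…l_1) have the same parity, ←x is the largest element (w.r.t. ≺_L) of the cylinder [x_n…x_1], and otherwise ←x is the smallest element of [x_n…x_1]. -/
/-!
A sequence `t ≠ x` of the cylinder `[x_n…x_1]` first differs from `x` at some `k ≥ n`. There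
`x_k = l_k`, so `t_k ≠ l_k`, and since `x` and `L` agree on `[n, k)` the parity of
`#₁(x_k…x_1) + #₁(l_k…l_1)` is the one at `n`; the definition of `≺_L` then puts `t` below `x`
in the even case and above it in the odd case.
-/

lemma cnt_congr {s t : ℕ → Bool} {k : ℕ} (h : ∀ i < k, s i = t i) : cnt s k = cnt t k := by
  unfold cnt
  congr 1
  exact Finset.filter_congr fun i hi => by rw [h i (Finset.mem_range.mp hi)]

lemma cnt_eq_cnt_add_card_Ico (s : ℕ → Bool) {n k : ℕ} (h : n ≤ k) :
    cnt s k = cnt s n + ((Finset.Ico n k).filter (fun i => s i = true)).card := by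
  unfold cnt
  rw [Finset.range_eq_Ico, ← Finset.Ico_union_Ico_eq_Ico (Nat.zero_le n) h, Finset.filter_union,
    Finset.card_union_of_disjoint
      (Finset.disjoint_filter_filter (Finset.Ico_disjoint_Ico_consecutive 0 n k)),
    Finset.range_eq_Ico]

lemma even_cnt_add_cnt_iff_of_eq_on_Ico {x L : ℕ → Bool} {n k : ℕ} (hnk : n ≤ k)
    (h : ∀ i, n ≤ i → i < k → x i = L i) :
    Even (cnt x k + cnt L k) ↔ Even (cnt x n + cnt L n) := by
  have hIco : ((Finset.Ico n k).filter (fun i => x i = true)).card =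
      ((Finset.Ico n k).filter (fun i => L i = true)).card := by
    congr 1
    exact Finset.filter_congr fun i hi =>
      by rw [h i (Finset.mem_Ico.mp hi).1 (Finset.mem_Ico.mp hi).2]
  rw [cnt_eq_cnt_add_card_Ico x hnk, cnt_eq_cnt_add_card_Ico L hnk, hIco, Nat.even_iff,
    Nat.even_iff]
  omega

lemma exists_first_ne {s t : ℕ → Bool} (h : s ≠ t) :
    ∃ k, (∀ i < k, s i = t i) ∧ s k ≠ t k := by
  classical
  have hex : ∃ k, s k ≠ t k := Function.ne_iff.mp h
  exact ⟨Nat.find hex, fun i hi => not_not.mp (Nat.find_min hex hi), Nat.find_spec hex⟩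

lemma exists_first_ne_of_eq_tail {L x t : ℕ → Bool} {n : ℕ}
    (htail : ∀ k, n ≤ k → x k = L k) (hcyl : ∀ i < n, t i = x i) (hne : t ≠ x) :
    ∃ k, (∀ i < k, t i = x i) ∧ t k ≠ x k ∧ x k = L k ∧ cnt t k = cnt x k ∧
      (Even (cnt x k + cnt L k) ↔ Even (cnt x n + cnt L n)) := by
  obtain ⟨k, hbelow, hk⟩ := exists_first_ne hne
  have hnk : n ≤ k := by
    by_contra! hkn
    exact hk (hcyl k hkn)
  exact ⟨k, hbelow, hk, htail k hnk, cnt_congr hbelow,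
    even_cnt_add_cnt_iff_of_eq_on_Ico hnk fun i hi _ => htail i hi⟩

theorem tail_of_L_is_extremum_general (ν L x : ℕ → Bool)
    (n : ℕ) (htail : ∀ k, n ≤ k → x k = L k) :
    (Even (cnt x n + cnt L n) →
      ∀ t, AdmissibleLeft ν t → (∀ i, i < n → t i = x i) → t = x ∨ ltL L t x) ∧
    (¬ Even (cnt x n + cnt L n) →
      ∀ t, AdmissibleLeft ν t → (∀ i, i < n → t i = x i) → t = x ∨ ltL L x t) := by
  refine ⟨fun heven t _ hcyl => ?_, fun hodd t _ hcyl => ?_⟩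
  all_goals
    by_cases hne : t = x
    · exact Or.inl hne
    obtain ⟨k, hbelow, hk, hxL, hcnt, hpar⟩ := exists_first_ne_of_eq_tail htail hcyl hne
    right
  · exact ⟨k, hbelow, hk, Or.inl ⟨hxL, hcnt ▸ hpar.mpr heven⟩⟩
  · exact ⟨k, fun i hi => (hbelow i hi).symm, Ne.symm hk, Or.inr ⟨hxL, mt hpar.mp hodd⟩⟩

/-- If the admissible left-infinite sequence `←x` has the same tail as `L` from
index `n` on, then `←x` is the largest element (w.r.t. `≺_L`) of the cylinder
`[x_n…x_1]` when `#₁(x_n…x_1)` and `#₁(l_n…l_1)` have the same parity, and the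
smallest otherwise. -/
theorem tail_of_L_is_extremum (ν L x : ℕ → Bool) (hν : AdmissibleSeq ν)
    (hL : AdmissibleLeft ν L) (hx : AdmissibleLeft ν x)
    (n : ℕ) (htail : ∀ k, n ≤ k → x k = L k) :
    (Even (cnt x n + cnt L n) →
      ∀ t, AdmissibleLeft ν t → (∀ i, i < n → t i = x i) → t = x ∨ ltL L t x) ∧
    (¬ Even (cnt x n + cnt L n) →
      ∀ t, AdmissibleLeft ν t → (∀ i, i < n → t i = x i) → t = x ∨ ltL L x t) :=
  tail_of_L_is_extremum_general ν L x n htail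
end
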